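/- Let b1, b2, σ2, π‖k‖² > 0 with k ∈ ℕ*×ℕ* and σ1 > 0. Define Δ3(‖U‖²) = (320 b1 b2² π² ‖k‖² − 16 σ1 ‖U‖²) σ2² + (512 b1 b2³ π⁴ ‖k‖⁴ − 64 b2 π² σ1 ‖k‖² ‖U‖²) σ2 − 64 b2² π⁴ σ1 ‖k‖⁴ ‖U‖² + 256 b1 b2⁴ π⁶ ‖k‖⁶ + 64 b1 b2 σ2³. Then Δ3(0) > 0, Δ3 is a strictly decreasing affine function of ‖U‖², and there exists U* > 0 such that Δ3(‖U‖²) < 0 for all ‖U‖ > U*. -/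

import Mathlib

open Real

/-
With x = b2 π² ‖k‖², the determinant factors as
  Δ3(u) = 16 (σ2 + 2x)² (4 b1 b2 (σ2 + x) − σ1 u),
a positive multiple of a line of slope −σ1 whose value at 0 is positive. Hence Δ3 changes sign exactly
at u = 4 b1 b2 (σ2 + x) / σ1, and U* is the square root of that critical value.
-/

theorem hurwitz_determinant_sign_general (b1 b2 σ1 σ2 : ℝ)
    (hb1 : 0 < b1) (hb2 : 0 < b2) (hσ1 : 0 < σ1) (hσ2 : 0 < σ2)
    (k1 k2 : ℕ)
    (nk : ℝ) (hnk : nk = (k1 : ℝ) ^ 2 + (k2 : ℝ) ^ 2)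
    (Δ3 : ℝ → ℝ)
    (hΔ3 : ∀ u : ℝ, Δ3 u =
      (320 * b1 * b2 ^ 2 * π ^ 2 * nk - 16 * σ1 * u) * σ2 ^ 2 +
      (512 * b1 * b2 ^ 3 * π ^ 4 * nk ^ 2 - 64 * b2 * π ^ 2 * σ1 * nk * u) * σ2 -
      64 * b2 ^ 2 * π ^ 4 * σ1 * nk ^ 2 * u +
      256 * b1 * b2 ^ 4 * π ^ 6 * nk ^ 3 + 64 * b1 * b2 * σ2 ^ 3) :
    Δ3 0 > 0 ∧ StrictAnti Δ3 ∧
    (∃ c1 c0 : ℝ, c1 < 0 ∧ ∀ u, Δ3 u = c1 * u + c0) ∧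
    ∃ Ustar > 0, ∀ U : ℝ, Ustar < U → Δ3 (U ^ 2) < 0 := by
  set x := b2 * π ^ 2 * nk with hx_def
  set A := 16 * (σ2 + 2 * x) ^ 2
  set B := 4 * b1 * b2 * (σ2 + x)
  have hx : 0 ≤ x := by rw [hx_def, hnk]; positivity
  have hA : 0 < A := by positivity
  have hB : 0 < B := by positivity
  have hfactor : ∀ u, Δ3 u = A * (B - σ1 * u) := fun u => by rw [hΔ3]; ring
  refine ⟨?_, fun u v huv => ?_, ⟨-(A * σ1), A * B, ?_, fun u => ?_⟩, √(B / σ1), by positivity,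
    fun U hU => ?_⟩
  · rw [hfactor]; simpa using mul_pos hA hB
  · rw [hfactor, hfactor]
    exact mul_lt_mul_of_pos_left (by nlinarith) hA
  · nlinarith
  · rw [hfactor]; ring
  · have hBU : B < σ1 * U ^ 2 := (div_lt_iff₀' hσ1).mp (lt_sq_of_sqrt_lt hU)
    rw [hfactor]
    exact mul_neg_of_pos_of_neg hA (by linarith)

theorem hurwitz_determinant_sign (b1 b2 σ1 σ2 : ℝ)
    (hb1 : 0 < b1) (hb2 : 0 < b2) (hσ1 : 0 < σ1) (hσ2 : 0 < σ2)
    (k1 k2 : ℕ) (hk1 : 0 < k1) (hk2 : 0 < k2)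
    (nk : ℝ) (hnk : nk = (k1 : ℝ) ^ 2 + (k2 : ℝ) ^ 2)
    (Δ3 : ℝ → ℝ)
    (hΔ3 : ∀ u : ℝ, Δ3 u =
      (320 * b1 * b2 ^ 2 * π ^ 2 * nk - 16 * σ1 * u) * σ2 ^ 2 +
      (512 * b1 * b2 ^ 3 * π ^ 4 * nk ^ 2 - 64 * b2 * π ^ 2 * σ1 * nk * u) * σ2 -
      64 * b2 ^ 2 * π ^ 4 * σ1 * nk ^ 2 * u +
      256 * b1 * b2 ^ 4 * π ^ 6 * nk ^ 3 + 64 * b1 * b2 * σ2 ^ 3) :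
    Δ3 0 > 0 ∧ StrictAnti Δ3 ∧
    (∃ c1 c0 : ℝ, c1 < 0 ∧ ∀ u, Δ3 u = c1 * u + c0) ∧
    ∃ Ustar > 0, ∀ U : ℝ, Ustar < U → Δ3 (U ^ 2) < 0 :=
  hurwitz_determinant_sign_general b1 b2 σ1 σ2 hb1 hb2 hσ1 hσ2 k1 k2 nk hnk Δ3 hΔ3
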